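/- Let H be an n×n complex Hermitian matrix (possibly with repeated eigenvalues) with orthonormal eigenbasis v_1, …, v_n and real eigenvalues λ_1, …, λ_n. Then for every unit vector ψ0 ∈ ℂ^n and every standard basis vector f, (1/T) ∫₀^T |⟨f, e^{−itH} ψ0⟩|² dt converges, as T → ∞, to Σ_{(i,l) : λ_i = λ_l} ⟨f, v_i⟩⟨v_i, ψ0⟩ · conj(⟨f, v_l⟩⟨v_l, ψ0⟩), the sum taken over all ordered pairs (i,l) with λ_i = λ_l. -/

import Mathlib

open scoped BigOperators

/-- Exponential of a matrix acting on an eigenvector. -/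
lemma exp_mulVec_eigen {n : ℕ} (M : Matrix (Fin n) (Fin n) ℂ) (μ : ℂ) (w : Fin n → ℂ)
    (h : M.mulVec w = μ • w) :
    (NormedSpace.exp M).mulVec w = Complex.exp μ • w := by
  letI : SeminormedRing (Matrix (Fin n) (Fin n) ℂ) := Matrix.linftyOpSemiNormedRing
  letI : NormedRing (Matrix (Fin n) (Fin n) ℂ) := Matrix.linftyOpNormedRing
  letI : NormedAlgebra ℂ (Matrix (Fin n) (Fin n) ℂ) := Matrix.linftyOpNormedAlgebra
  have hpow : ∀ k : ℕ, (M ^ k).mulVec w = μ ^ k • w := by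
    intro k
    induction k with
    | zero => simp [Matrix.one_mulVec]
    | succ k ih =>
      rw [pow_succ', ← Matrix.mulVec_mulVec, ih, Matrix.mulVec_smul, h, smul_smul, ← pow_succ]
  let L : Matrix (Fin n) (Fin n) ℂ →ₗ[ℂ] (Fin n → ℂ) :=
    { toFun := fun A => A.mulVec w
      map_add' := fun A B => Matrix.add_mulVec A B w
      map_smul' := fun c A => Matrix.smul_mulVec c A w }
  have hsum : Summable (fun k : ℕ => (k.factorial : ℂ)⁻¹ • M ^ k) :=
    NormedSpace.expSeries_summable' M
  have h1 : (NormedSpace.exp M).mulVec w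
      = ∑' k : ℕ, ((k.factorial : ℂ)⁻¹ • M ^ k).mulVec w := by
    rw [NormedSpace.exp_eq_tsum (𝕂 := ℂ)]
    exact (LinearMap.toContinuousLinearMap L).map_tsum hsum
  have h2 : ∀ k : ℕ, ((k.factorial : ℂ)⁻¹ • M ^ k).mulVec w
      = ((k.factorial : ℂ)⁻¹ * μ ^ k) • w := by
    intro k
    rw [Matrix.smul_mulVec, hpow, smul_smul]
  rw [h1]
  simp_rw [h2]
  have hsμ : Summable (fun k : ℕ => (k.factorial : ℂ)⁻¹ * μ ^ k) := by
    simpa [smul_eq_mul] using NormedSpace.expSeries_summable' (𝕂 := ℂ) μ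
  rw [hsμ.tsum_smul_const]
  congr 1
  rw [Complex.exp_eq_exp_ℂ, NormedSpace.exp_eq_tsum (𝕂 := ℂ)]
  simp [smul_eq_mul]

/-- For an `n × n` Hermitian matrix `H` (possibly with repeated
eigenvalues), orthonormal eigenbasis `v` with real eigenvalues `lam`, for every unit
initial state `ψ0` and every standard basis vector (indexed by `f`), the time-averaged
probability `(1/T) ∫₀ᵀ |⟨f, e^{-itH} ψ0⟩|² dt` converges, as `T → ∞`, to
`∑_{(i,l) : lam i = lam l} ⟨f, v i⟩⟨v i, ψ0⟩ ⋅ conj (⟨f, v l⟩⟨v l, ψ0⟩)`. -/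
theorem quantum_walk_time_average_tendsto_limiting_distribution_degenerate
    {n : ℕ} (hn : 1 ≤ n) (H : Matrix (Fin n) (Fin n) ℂ) (hH : H.IsHermitian)
    (lam : Fin n → ℝ)
    (v : Fin n → (Fin n → ℂ))
    (hortho : ∀ i j, ∑ k, star (v i k) * v j k = if i = j then 1 else 0)
    (heig : ∀ i, H.mulVec (v i) = (lam i : ℂ) • v i)
    (ψ0 : Fin n → ℂ) (hψ0 : ∑ k, ‖ψ0 k‖ ^ 2 = 1)
    (f : Fin n) :
    Filter.Tendsto
      (fun T : ℝ => (((1 / T) * ∫ t in (0:ℝ)..T,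
        ‖((NormedSpace.exp ((-(t : ℂ) * Complex.I) • H)).mulVec ψ0) f‖ ^ 2 : ℝ) : ℂ))
      Filter.atTop
      (nhds (∑ i, ∑ l, if lam i = lam l then
        (v i f * ∑ k, star (v i k) * ψ0 k) * star (v l f * ∑ k, star (v l k) * ψ0 k)
        else 0)) := by
  classical
  set c : Fin n → ℂ := fun i => ∑ k, star (v i k) * ψ0 k with hc
  set w : Fin n → ℂ := fun i => v i f * c i with hw
  -- completeness relation
  have hcomp : ∀ k m, (∑ i, v i k * star (v i m)) = if k = m then (1:ℂ) else 0 := by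
    have hVhV : (Matrix.of fun k i => v i k).conjTranspose * (Matrix.of fun k i => v i k) = 1 := by
      ext i j
      simpa [Matrix.mul_apply, Matrix.conjTranspose_apply, Matrix.one_apply]
        using hortho i j
    have hVVh := mul_eq_one_comm.mp hVhV
    intro k m
    have := congrFun (congrFun hVVh k) m
    simpa [Matrix.mul_apply, Matrix.conjTranspose_apply, Matrix.one_apply] using this
  -- decomposition of ψ0
  have hψ : ∀ k, ∑ i, c i * v i k = ψ0 k := by
    intro k
    calc ∑ i, c i * v i k = ∑ i, ∑ m, (v i k * star (v i m)) * ψ0 m := by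
          refine Finset.sum_congr rfl fun i _ => ?_
          rw [hc, Finset.sum_mul]
          exact Finset.sum_congr rfl fun m _ => by ring
      _ = ∑ m, (∑ i, v i k * star (v i m)) * ψ0 m := by
          rw [Finset.sum_comm]
          exact Finset.sum_congr rfl fun m _ => (Finset.sum_mul _ _ _).symm
      _ = ψ0 k := by
          rw [Finset.sum_congr rfl fun m (_ : m ∈ Finset.univ) => by rw [hcomp k m]]
          simp
  -- value of the evolved state at f
  have hg : ∀ t : ℝ, ((NormedSpace.exp ((-(t : ℂ) * Complex.I) • H)).mulVec ψ0) f
      = ∑ i, Complex.exp (-(t : ℂ) * Complex.I * lam i) * w i := by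
    intro t
    have hψ0' : ψ0 = ∑ i, c i • v i := by
      funext k
      rw [← hψ k]
      simp [Finset.sum_apply]
    have heig' : ∀ i, ((-(t : ℂ) * Complex.I) • H).mulVec (v i)
        = (-(t : ℂ) * Complex.I * lam i) • v i := by
      intro i
      rw [Matrix.smul_mulVec, heig, smul_smul]
    have hsum' : (NormedSpace.exp ((-(t : ℂ) * Complex.I) • H)).mulVec ψ0
        = ∑ i, (c i * Complex.exp (-(t : ℂ) * Complex.I * lam i)) • v i := by
      rw [hψ0', ← Matrix.mulVecLin_apply, map_sum]
      refine Finset.sum_congr rfl fun i _ => ?_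
      rw [map_smul, Matrix.mulVecLin_apply, exp_mulVec_eigen _ _ _ (heig' i), smul_smul]
    rw [hsum']
    simp only [Finset.sum_apply, Pi.smul_apply, smul_eq_mul, hw]
    exact Finset.sum_congr rfl fun i _ => by ring
  -- integrand identity over ℂ
  have hinteg : ∀ t : ℝ,
      ((‖((NormedSpace.exp ((-(t : ℂ) * Complex.I) • H)).mulVec ψ0) f‖ ^ 2 : ℝ) : ℂ)
      = ∑ i, ∑ l, (w i * star (w l))
          * Complex.exp (((lam l - lam i : ℝ) : ℂ) * Complex.I * t) := by
    intro t
    set z := ((NormedSpace.exp ((-(t : ℂ) * Complex.I) • H)).mulVec ψ0) f with hz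
    have h1 : ((‖z‖ ^ 2 : ℝ) : ℂ) = z * (starRingEnd ℂ) z := by
      rw [Complex.mul_conj]
      norm_cast
      rw [← Complex.sq_norm]
    rw [h1, hz, hg t, map_sum, Finset.sum_mul_sum]
    simp only [← starRingEnd_apply]
    refine Finset.sum_congr rfl fun i _ => Finset.sum_congr rfl fun l _ => ?_
    have key : Complex.exp (-(t : ℂ) * Complex.I * lam i)
          * Complex.exp ((starRingEnd ℂ) (-(t : ℂ) * Complex.I * lam l))
        = Complex.exp (((lam l - lam i : ℝ) : ℂ) * Complex.I * t) := by
      rw [← Complex.exp_add]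
      congr 1
      simp only [map_mul, map_neg, Complex.conj_ofReal, Complex.conj_I]
      push_cast
      ring
    rw [map_mul, ← Complex.exp_conj, ← key]
    ring
  -- continuity / integrability
  have hcontc : ∀ (i l : Fin n), Continuous (fun t : ℝ =>
      (w i * star (w l)) * Complex.exp (((lam l - lam i : ℝ) : ℂ) * Complex.I * t)) := by
    intro i l
    exact continuous_const.mul (Complex.continuous_exp.comp
      ((continuous_const.mul continuous_const).mul Complex.continuous_ofReal))
  -- key identity for the averaged integral
  have hkey : ∀ T : ℝ,
      (((1 / T) * ∫ t in (0:ℝ)..T,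
        ‖((NormedSpace.exp ((-(t : ℂ) * Complex.I) • H)).mulVec ψ0) f‖ ^ 2 : ℝ) : ℂ)
      = ∑ i, ∑ l, (w i * star (w l)) * (((1 / T : ℝ) : ℂ)
          * ∫ t in (0:ℝ)..T, Complex.exp (((lam l - lam i : ℝ) : ℂ) * Complex.I * t)) := by
    intro T
    have h1 : ((∫ t in (0:ℝ)..T,
        ‖((NormedSpace.exp ((-(t : ℂ) * Complex.I) • H)).mulVec ψ0) f‖ ^ 2 : ℝ) : ℂ)
        = ∑ i, ∑ l, (w i * star (w l))
            * ∫ t in (0:ℝ)..T, Complex.exp (((lam l - lam i : ℝ) : ℂ) * Complex.I * t) := by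
      rw [← intervalIntegral.integral_ofReal]
      rw [intervalIntegral.integral_congr (g := fun t : ℝ => ∑ i, ∑ l, (w i * star (w l))
            * Complex.exp (((lam l - lam i : ℝ) : ℂ) * Complex.I * t)) (fun t _ => hinteg t)]
      rw [intervalIntegral.integral_finset_sum (fun i _ =>
        ((continuous_finset_sum _ fun l _ => hcontc i l).intervalIntegrable _ _))]
      refine Finset.sum_congr rfl fun i _ => ?_
      rw [intervalIntegral.integral_finset_sum (fun l _ =>
        ((hcontc i l).intervalIntegrable _ _))]
      refine Finset.sum_congr rfl fun l _ => ?_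
      exact intervalIntegral.integral_const_mul _ _
    rw [Complex.ofReal_mul, h1, Finset.mul_sum]
    refine Finset.sum_congr rfl fun i _ => ?_
    rw [Finset.mul_sum]
    exact Finset.sum_congr rfl fun l _ => by ring
  -- limit of each averaged oscillatory term
  have hterm : ∀ (i l : Fin n), Filter.Tendsto (fun T : ℝ => ((1 / T : ℝ) : ℂ)
        * ∫ t in (0:ℝ)..T, Complex.exp (((lam l - lam i : ℝ) : ℂ) * Complex.I * t))
      Filter.atTop (nhds (if lam i = lam l then 1 else 0)) := by
    intro i l
    by_cases hll : lam i = lam l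
    · rw [if_pos hll]
      refine Filter.Tendsto.congr' ?_ tendsto_const_nhds
      filter_upwards [Filter.eventually_ge_atTop (1:ℝ)] with T hT
      have hT0 : T ≠ 0 := by linarith
      have : (fun t : ℝ => Complex.exp (((lam l - lam i : ℝ) : ℂ) * Complex.I * t))
          = fun _ : ℝ => (1:ℂ) := by
        funext t
        rw [hll]
        simp
      rw [this, intervalIntegral.integral_const]
      simp only [sub_zero, smul_eq_mul, mul_one, Complex.real_smul]
      rw [← Complex.ofReal_mul]
      norm_cast
      field_simp
    · rw [if_neg hll]
      have hμ : ((lam l - lam i : ℝ) : ℂ) * Complex.I ≠ 0 := by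
        refine mul_ne_zero ?_ Complex.I_ne_zero
        exact_mod_cast sub_ne_zero.mpr fun h => hll h.symm
      set C : ℂ := ((lam l - lam i : ℝ) : ℂ) * Complex.I with hC
      have habs : ∀ T : ℝ, ‖Complex.exp (C * T)‖ = 1 := by
        intro T
        rw [Complex.norm_exp]
        have : (C * T).re = 0 := by simp [hC]
        rw [this, Real.exp_zero]
      refine squeeze_zero_norm' (a := fun T => (1 / T) * (2 / ‖C‖)) ?_ ?_
      · refine Filter.eventually_gt_atTop 0 |>.mono fun T hT => ?_
        show ‖((1 / T : ℝ) : ℂ) * ∫ t in (0:ℝ)..T, Complex.exp (C * t)‖ ≤ (1 / T) * (2 / ‖C‖)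
        rw [integral_exp_mul_complex hμ, norm_mul, Complex.norm_real, Real.norm_eq_abs,
          abs_of_pos (by positivity : (0:ℝ) < 1 / T)]
        refine mul_le_mul_of_nonneg_left ?_ (by positivity)
        rw [norm_div]
        refine div_le_div_of_nonneg_right ?_ ?_ |>.trans_eq rfl
        · calc ‖Complex.exp (C * T) - Complex.exp (C * 0)‖
              ≤ ‖Complex.exp (C * T)‖ + ‖Complex.exp (C * 0)‖ := norm_sub_le _ _
            _ = 2 := by rw [habs T, mul_zero, Complex.exp_zero, norm_one]; norm_num
        · exact (norm_pos_iff.mpr hμ).le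
      · have h0 := tendsto_inv_atTop_zero.mul_const (2 / ‖C‖)
        rw [zero_mul] at h0
        simpa [one_div] using h0
  -- assemble
  have final : Filter.Tendsto (fun T : ℝ => ∑ i, ∑ l, (w i * star (w l)) * (((1 / T : ℝ) : ℂ)
        * ∫ t in (0:ℝ)..T, Complex.exp (((lam l - lam i : ℝ) : ℂ) * Complex.I * t)))
      Filter.atTop
      (nhds (∑ i, ∑ l, (w i * star (w l)) * (if lam i = lam l then 1 else 0))) :=
    tendsto_finset_sum _ fun i _ => tendsto_finset_sum _ fun l _ => (hterm i l).const_mul _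
  have hfin : (∑ i, ∑ l, (w i * star (w l)) * (if lam i = lam l then (1:ℂ) else 0))
      = ∑ i, ∑ l, if lam i = lam l then
        (v i f * ∑ k, star (v i k) * ψ0 k) * star (v l f * ∑ k, star (v l k) * ψ0 k)
        else 0 := by
    refine Finset.sum_congr rfl fun i _ => Finset.sum_congr rfl fun l _ => ?_
    by_cases h : lam i = lam l <;> simp [h, hw, hc]
  rw [← hfin]
  exact final.congr fun T => (hkey T).symm
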